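/- For a > 1 and b < 0, the second derivative of the Melnikov function satisfies M″(h) < 0 for every h ≥ (a² - 1)/2. -/

import Mathlib

/-!
With `s = √(2h)` the derivatives of `M` are elementary in `s`, `h` and `arctan (s / (a ∓ 1))`:
`M''(h) = -2π - 2 (arctan (s / (a - 1)) - arctan (s / (a + 1)))`
`         + (2b - 4h) / s · (g (a + 1) - g (a - 1))`
with `g c = c / (c² + 2h)`. For `a > 1` the arctangent difference is nonnegative, `2b - 4h < 0`
when `b < 0`, and `g (a + 1) - g (a - 1)` has the sign of `2h - (a² - 1)`; so for `2h ≥ a² - 1`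
the last two terms are `≤ 0` and `M''(h) ≤ -2π`.
-/

/-- The Melnikov function `M(h; a, b)` of the discontinuous SD oscillator. -/
noncomputable def Mel (a b h : ℝ) : ℝ :=
  -(Real.pi / 4) * (a + 1) ^ 2 * (5 * a ^ 2 + 10 * a + 4 * b + 5)
    - (15 * a ^ 2 + 4 * b + 5) * Real.sqrt h / Real.sqrt 2
    - (3 * a ^ 2 + 6 * a + 2 * b + 3) * Real.pi * h
    - (13 * Real.sqrt 2 / 3) * (h * Real.sqrt h)
    - Real.pi * h ^ 2
    - (1 / 4) * (a ^ 2 - 2 * a + 2 * h + 1) * (5 * a ^ 2 - 10 * a + 4 * b + 2 * h + 5)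
        * Real.arctan (Real.sqrt (2 * h) / (a - 1))
    + (1 / 4) * (a ^ 2 + 2 * a + 2 * h + 1) * (5 * a ^ 2 + 10 * a + 4 * b + 2 * h + 5)
        * Real.arctan (Real.sqrt (2 * h) / (a + 1))

open Real

section Derivatives

variable {x : ℝ}

lemma hasDerivAt_sqrt_two_mul (hx : 0 < x) :
    HasDerivAt (fun y => √(2 * y)) (1 / √(2 * x)) x := by
  convert ((hasDerivAt_id' x).const_mul 2).sqrt (by positivity) using 1
  have hs : 0 < √(2 * x) := sqrt_pos.2 (by positivity)
  field_simp

lemma hasDerivAt_arctan_sqrt_two_mul_div (c : ℝ) (hx : 0 < x) :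
    HasDerivAt (fun y => arctan (√(2 * y) / c)) (c / ((c ^ 2 + 2 * x) * √(2 * x))) x := by
  convert ((hasDerivAt_sqrt_two_mul hx).div_const c).arctan using 1
  rcases eq_or_ne c 0 with rfl | hc
  · simp -- both sides vanish, as `√(2 * x) / 0 = 0`
  have hs : 0 < √(2 * x) := sqrt_pos.2 (by positivity)
  rw [div_pow, sq_sqrt (by positivity)]
  field_simp

lemma hasDerivAt_quadratic_mul_arctan (b c : ℝ) (hx : 0 < x) :
    HasDerivAt
      (fun y => (c ^ 2 + 2 * y) * (5 * c ^ 2 + 4 * b + 2 * y) / 4 * arctan (√(2 * y) / c))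
      ((3 * c ^ 2 + 2 * b + 2 * x) * arctan (√(2 * x) / c)
        + c * (5 * c ^ 2 + 4 * b + 2 * x) / (4 * √(2 * x))) x := by
  have hp : HasDerivAt (fun y => (c ^ 2 + 2 * y) * (5 * c ^ 2 + 4 * b + 2 * y) / 4)
      (3 * c ^ 2 + 2 * b + 2 * x) x := by
    refine (((((hasDerivAt_id' x).const_mul 2).const_add (c ^ 2)).fun_mul
      (((hasDerivAt_id' x).const_mul 2).const_add (5 * c ^ 2 + 4 * b))).div_const 4).congr_deriv ?_
    ring
  refine (hp.fun_mul (hasDerivAt_arctan_sqrt_two_mul_div c hx)).congr_deriv ?_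
  have : c ^ 2 + 2 * x ≠ 0 := by positivity
  have hs : 0 < √(2 * x) := sqrt_pos.2 (by positivity)
  field_simp

lemma hasDerivAt_linear_mul_arctan (b c : ℝ) (hx : 0 < x) :
    HasDerivAt (fun y => (3 * c ^ 2 + 2 * b + 2 * y) * arctan (√(2 * y) / c))
      (2 * arctan (√(2 * x) / c)
        + (3 * c ^ 2 + 2 * b + 2 * x) * c / ((c ^ 2 + 2 * x) * √(2 * x))) x := by
  have hp : HasDerivAt (fun y => 3 * c ^ 2 + 2 * b + 2 * y) 2 x := by
    simpa using ((hasDerivAt_id' x).const_mul 2).const_add (3 * c ^ 2 + 2 * b)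
  refine (hp.fun_mul (hasDerivAt_arctan_sqrt_two_mul_div c hx)).congr_deriv ?_
  ring

end Derivatives

noncomputable def melDeriv (a b h : ℝ) : ℝ :=
  -6 * √(2 * h) - (3 * a ^ 2 + 6 * a + 2 * b + 3) * π - 2 * π * h
    - (3 * (a - 1) ^ 2 + 2 * b + 2 * h) * arctan (√(2 * h) / (a - 1))
    + (3 * (a + 1) ^ 2 + 2 * b + 2 * h) * arctan (√(2 * h) / (a + 1))

noncomputable def melDeriv2 (a b h : ℝ) : ℝ :=
  -2 * π - 2 * (arctan (√(2 * h) / (a - 1)) - arctan (√(2 * h) / (a + 1)))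
    + (2 * b - 4 * h) / √(2 * h)
      * ((a + 1) / ((a + 1) ^ 2 + 2 * h) - (a - 1) / ((a - 1) ^ 2 + 2 * h))

theorem hasDerivAt_Mel (a b : ℝ) {h : ℝ} (hh : 0 < h) :
    HasDerivAt (Mel a b) (melDeriv a b h) h := by
  have hMel : Mel a b = fun x => -(π / 4) * (a + 1) ^ 2 * (5 * a ^ 2 + 10 * a + 4 * b + 5)
      - (15 * a ^ 2 + 4 * b + 5) / 2 * √(2 * x) - (3 * a ^ 2 + 6 * a + 2 * b + 3) * π * x
      - 13 / 3 * (x * √(2 * x)) - π * x ^ 2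
      - ((a - 1) ^ 2 + 2 * x) * (5 * (a - 1) ^ 2 + 4 * b + 2 * x) / 4
          * arctan (√(2 * x) / (a - 1))
      + ((a + 1) ^ 2 + 2 * x) * (5 * (a + 1) ^ 2 + 4 * b + 2 * x) / 4
          * arctan (√(2 * x) / (a + 1)) := by
    ext x
    have h2 : √2 ^ 2 = 2 := sq_sqrt zero_le_two
    rw [Mel, sqrt_mul zero_le_two]
    field_simp
    linear_combination 12 * (15 * a ^ 2 + 4 * b + 5) * √x * h2
  have hS := hasDerivAt_sqrt_two_mul hh
  rw [hMel]
  refine ((((((hasDerivAt_const h _).sub (hS.const_mul _)).sub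
    ((hasDerivAt_id' h).const_mul _)).sub (((hasDerivAt_id' h).fun_mul hS).const_mul _)).sub
    ((hasDerivAt_pow 2 h).const_mul π)).sub (hasDerivAt_quadratic_mul_arctan b (a - 1) hh)
    |>.add (hasDerivAt_quadratic_mul_arctan b (a + 1) hh)).congr_deriv ?_
  have hs : 0 < √(2 * h) := sqrt_pos.2 (by positivity)
  have hs2 : √(2 * h) ^ 2 = 2 * h := sq_sqrt (by positivity)
  unfold melDeriv
  generalize √(2 * h) = s at hs hs2 ⊢
  obtain rfl : h = s ^ 2 / 2 := by linarith
  field_simp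
  ring

theorem hasDerivAt_melDeriv (a b : ℝ) {h : ℝ} (hh : 0 < h) :
    HasDerivAt (melDeriv a b) (melDeriv2 a b h) h := by
  unfold melDeriv
  refine (((((hasDerivAt_sqrt_two_mul hh).const_mul (-6)).sub_const _).sub
    ((hasDerivAt_id' h).const_mul (2 * π))).sub (hasDerivAt_linear_mul_arctan b (a - 1) hh)
    |>.add (hasDerivAt_linear_mul_arctan b (a + 1) hh)).congr_deriv ?_
  have hs : 0 < √(2 * h) := sqrt_pos.2 (by positivity)
  have hm : (a - 1) ^ 2 + 2 * h ≠ 0 := by positivity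
  have hp : (a + 1) ^ 2 + 2 * h ≠ 0 := by positivity
  unfold melDeriv2
  field_simp
  ring

lemma div_sq_add_le_div_sq_add {c₁ c₂ k : ℝ} (hc : c₁ ≤ c₂) (hk : 0 < k)
    (hck : c₁ * c₂ ≤ k) :
    c₁ / (c₁ ^ 2 + k) ≤ c₂ / (c₂ ^ 2 + k) := by
  rw [div_le_div_iff₀ (by positivity) (by positivity)]
  nlinarith [mul_nonneg (sub_nonneg.2 hc) (sub_nonneg.2 hck)]

theorem melDeriv2_neg {a b h : ℝ} (ha : 1 < a) (hb : b < 0) (hh : (a ^ 2 - 1) / 2 ≤ h) :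
    melDeriv2 a b h < 0 := by
  have h_pos : 0 < h := by nlinarith
  have hs : 0 < √(2 * h) := sqrt_pos.2 (by positivity)
  have harctan : arctan (√(2 * h) / (a + 1)) ≤ arctan (√(2 * h) / (a - 1)) :=
    arctan_strictMono.monotone (div_le_div_of_nonneg_left hs.le (by linarith) (by linarith))
  have hfrac : (a - 1) / ((a - 1) ^ 2 + 2 * h) ≤ (a + 1) / ((a + 1) ^ 2 + 2 * h) :=
    div_sq_add_le_div_sq_add (by linarith) (by positivity) (by nlinarith)
  have hcoef : (2 * b - 4 * h) / √(2 * h) < 0 := div_neg_of_neg_of_pos (by linarith) hs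
  have hlast := mul_nonpos_of_nonpos_of_nonneg hcoef.le (sub_nonneg.2 hfrac)
  unfold melDeriv2
  linarith [pi_pos]

/-- For `a > 1` and `b < 0`, `M''(h) < 0` for every `h ≥ (a² - 1)/2`. -/
theorem melnikov_second_deriv_neg (a b : ℝ) (ha : 1 < a) (hb : b < 0) :
    ∀ h : ℝ, (a ^ 2 - 1) / 2 ≤ h → deriv (deriv (Mel a b)) h < 0 := by
  intro h hh
  have h_pos : 0 < h := by nlinarith
  have hderiv : deriv (Mel a b) =ᶠ[nhds h] melDeriv a b :=
    Filter.eventually_of_mem (Ioi_mem_nhds h_pos) fun x hx => (hasDerivAt_Mel a b hx).deriv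
  rw [hderiv.deriv_eq, (hasDerivAt_melDeriv a b h_pos).deriv]
  exact melDeriv2_neg ha hb hh
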